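/- Let R(θ) = P·R̂(θ) be the Yang–Baxter matrix for even N, with blocks determined by (2.8), and let λ(θ) be a scalar with λ(θ) ≠ ±e^{(m_{ab}^{(ε)}+m_{ba}^{(ε)})θ/2} for all a, b, ε. Then R(θ) − λ(θ)I is invertible and its inverse is X(θ) = −(1/2)∑_{ε=±}∑_{a,b=1}^{N} [λ² − e^{(m_{ab}^{(ε)}+m_{ba}^{(ε)})θ}]^{-1} { λ[(aa)⊗(bb) + ε(aā)⊗(bb̄)] + e^{m_{ba}^{(ε)}θ}[(ab)⊗(ba) + ε(ab̄)⊗(bā)] }. -/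

import Mathlib

open Matrix
open scoped Kronecker

noncomputable section

/-- The `N × N` matrix unit `(ab)`. -/
def E {N : ℕ} (a b : Fin N) : Matrix (Fin N) (Fin N) ℂ := Matrix.single a b 1

/-- Sign `ε = ±1` coded by a Boolean. -/
def sgn (ε : Bool) : ℂ := if ε then 1 else -1

/-- The nested-sequence projector `P_{ab}^{(ε)}` for `N = 2n` (`ā = 2n+1-a` via `Fin.rev`). -/
def P {N : ℕ} (ε : Bool) (a b : Fin N) : Matrix (Fin N × Fin N) (Fin N × Fin N) ℂ :=
  (1 / 2 : ℂ) •
    (E a a ⊗ₖ E b b + E a.rev a.rev ⊗ₖ E b.rev b.rev +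
      sgn ε • (E a a.rev ⊗ₖ E b b.rev + E a.rev a ⊗ₖ E b.rev b))

/-- Embedding of `{1,…,n}` into `{1,…,2n}`. -/
def emb {n : ℕ} (i : Fin n) : Fin (2 * n) := Fin.castLE (by omega) i

/-- `R̂(θ) = ∑_ε ∑_{i,j=1}^n e^{m_{ij}^{(ε)}θ}(P_{ij}^{(ε)} + P_{i j̄}^{(ε)})`. -/
def Rhat {n : ℕ} (m : Bool → Fin (2 * n) → Fin (2 * n) → ℝ) (θ : ℝ) :
    Matrix (Fin (2 * n) × Fin (2 * n)) (Fin (2 * n) × Fin (2 * n)) ℂ :=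
  ∑ ε : Bool, ∑ i : Fin n, ∑ j : Fin n,
    (Real.exp (m ε (emb i) (emb j) * θ) : ℂ) •
      (P ε (emb i) (emb j) + P ε (emb i) (emb j).rev)

/-- The flip matrix `𝐏 = ∑_{a,b}(ab)⊗(ba)`. -/
def flipP (N : ℕ) : Matrix (Fin N × Fin N) (Fin N × Fin N) ℂ :=
  ∑ a : Fin N, ∑ b : Fin N, E a b ⊗ₖ E b a

/-- The closed-form candidate inverse `X(θ) = (R(θ) − λI)⁻¹` of eq. (5.4). -/
def X {N : ℕ} (m : Bool → Fin N → Fin N → ℝ) (θ : ℝ) (lam : ℂ) :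
    Matrix (Fin N × Fin N) (Fin N × Fin N) ℂ :=
  (-(1 / 2) : ℂ) • ∑ ε : Bool, ∑ a : Fin N, ∑ b : Fin N,
    (lam ^ 2 - Complex.exp (((m ε a b + m ε b a) * θ : ℝ) : ℂ))⁻¹ •
      (lam • (E a a ⊗ₖ E b b + sgn ε • (E a a.rev ⊗ₖ E b b.rev)) +
        Complex.exp (((m ε b a * θ : ℝ)) : ℂ) •
          (E a b ⊗ₖ E b a + sgn ε • (E a b.rev ⊗ₖ E b a.rev)))

/-
Work with row vectors `v^ε_{xy} = e_{(x,y)} + ε e_{(x̄,ȳ)}`. Because `m` is invariant under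
`a ↦ ā` and `b ↦ b̄`, row `(x,y)` of `R̂(θ)` is `½ ∑_ε e^{m^ε_{xy}θ} v^ε_{xy}`, so `v^ε_{xy}` is a
left eigenvector of `R̂(θ)` with eigenvalue `e^{m^ε_{xy}θ}`; the flip sends `v^ε_{xy}` to
`v^ε_{yx}`. Hence `(λ v^ε_{ab} + e^{m^ε_{ba}θ} v^ε_{ba})(R − λ) = (e^{(m^ε_{ab}+m^ε_{ba})θ} − λ²) v^ε_{ab}`.
Row `(a,b)` of `X(θ)` is `−½ ∑_ε (λ² − e^{(m^ε_{ab}+m^ε_{ba})θ})⁻¹ (λ v^ε_{ab} + e^{m^ε_{ba}θ} v^ε_{ba})`,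
so row `(a,b)` of `X(R − λ)` is `½ ∑_ε v^ε_{ab} = e_{(a,b)}`. A one-sided inverse of a square
matrix is two-sided.
-/

open Matrix

lemma sum_eq_sum_emb_add_rev {n : ℕ} {M : Type*} [AddCommMonoid M] (f : Fin (2 * n) → M) :
    ∑ a, f a = ∑ i : Fin n, (f (emb i) + f (emb i).rev) := by
  rw [Finset.sum_add_distrib, ← Fin.sum_congr' f (two_mul n).symm, Fin.sum_univ_add,
    ← Equiv.sum_comp Fin.revPerm (fun i => f (Fin.cast _ (Fin.natAdd n i)))]
  congr 1
  refine Fintype.sum_congr _ _ fun i => congrArg f (Fin.ext ?_)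
  simp [emb]
  omega

@[simp] lemma sgn_true : sgn true = 1 := rfl

@[simp] lemma sgn_false : sgn false = -1 := rfl

lemma sgn_mul_self (ε : Bool) : sgn ε * sgn ε = 1 := by
  cases ε <;> simp

lemma E_kronecker_E {N : ℕ} (a x b y : Fin N) :
    E a x ⊗ₖ E b y = vecMulVec (Pi.single (a, b) 1) (Pi.single (x, y) 1) := by
  rw [E, E, single_kronecker_single, one_mul, single_eq_single_vecMulVec_single]

def signedVec {N : ℕ} (ε : Bool) (x y : Fin N) : Fin N × Fin N → ℂ :=
  Pi.single (x, y) 1 + sgn ε • Pi.single (x.rev, y.rev) 1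

lemma E_kronecker_E_add_sgn_smul {N : ℕ} (ε : Bool) (a b x y : Fin N) :
    E a x ⊗ₖ E b y + sgn ε • (E a x.rev ⊗ₖ E b y.rev) =
      vecMulVec (Pi.single (a, b) 1) (signedVec ε x y) := by
  rw [E_kronecker_E, E_kronecker_E, signedVec, vecMulVec_add, vecMulVec_smul]

lemma signedVec_rev {N : ℕ} (ε : Bool) (x y : Fin N) :
    signedVec ε x.rev y.rev = sgn ε • signedVec ε x y := by
  rw [signedVec, signedVec, Fin.rev_rev, Fin.rev_rev, smul_add, smul_smul, sgn_mul_self, one_smul,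
    add_comm]

lemma signedVec_vecMul {N : ℕ} (ε : Bool) (x y : Fin N)
    (M : Matrix (Fin N × Fin N) (Fin N × Fin N) ℂ) :
    signedVec ε x y ᵥ* M = M (x, y) + sgn ε • M (x.rev, y.rev) := by
  rw [signedVec, add_vecMul, smul_vecMul, single_one_vecMul, single_one_vecMul]
  rfl

lemma flipP_row {N : ℕ} (x y : Fin N) : flipP N (x, y) = Pi.single (y, x) 1 := by
  ext ⟨r, s⟩
  simp only [flipP, E, Matrix.sum_apply, kroneckerMap_apply, single_apply]
  rw [Fintype.sum_eq_single x fun a ha => Finset.sum_eq_zero fun b _ => by simp [ha],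
    Fintype.sum_eq_single y fun b hb => by simp [hb]]
  simp only [Pi.single_apply, Prod.mk.injEq]
  split_ifs <;> simp_all [eq_comm]

lemma signedVec_vecMul_flipP {N : ℕ} (ε : Bool) (x y : Fin N) :
    signedVec ε x y ᵥ* flipP N = signedVec ε y x := by
  rw [signedVec_vecMul, flipP_row, flipP_row, signedVec]

lemma P_eq_vecMulVec {N : ℕ} (ε : Bool) (a b : Fin N) :
    P ε a b = (1 / 2 : ℂ) • (vecMulVec (Pi.single (a, b) 1) (signedVec ε a b) +
      vecMulVec (Pi.single (a.rev, b.rev) 1) (signedVec ε a.rev b.rev)) := by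
  rw [P, ← E_kronecker_E_add_sgn_smul, ← E_kronecker_E_add_sgn_smul, Fin.rev_rev, Fin.rev_rev]
  congr 1
  module

lemma X_eq_vecMulVec {N : ℕ} (m : Bool → Fin N → Fin N → ℝ) (θ : ℝ) (lam : ℂ) :
    X m θ lam = (-(1 / 2) : ℂ) • ∑ ε, ∑ a, ∑ b, vecMulVec (Pi.single (a, b) 1)
      ((lam ^ 2 - Complex.exp (((m ε a b + m ε b a) * θ : ℝ) : ℂ))⁻¹ •
        (lam • signedVec ε a b + Complex.exp ((m ε b a * θ : ℝ) : ℂ) • signedVec ε b a)) := by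
  simp only [X, E_kronecker_E_add_sgn_smul, vecMulVec_smul, vecMulVec_add]

lemma sum_vecMulVec_signedVec (N : ℕ) :
    ∑ ε, ∑ a : Fin N, ∑ b : Fin N, vecMulVec (Pi.single (a, b) 1) (signedVec ε a b) =
      (2 : ℂ) • 1 := by
  have hv : ∀ a b : Fin N,
      signedVec true a b + signedVec false a b = (2 : ℂ) • Pi.single (a, b) 1 :=
    fun a b => by simp only [signedVec, sgn_true, sgn_false]; module
  simp_rw [Fintype.sum_bool, ← Finset.sum_add_distrib, ← vecMulVec_add, hv, vecMulVec_smul,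
    ← single_eq_single_vecMulVec_single, ← Finset.smul_sum, ← Fintype.sum_prod_type',
    sum_single_one]

lemma sq_sub_exp_ne_zero {lam : ℂ} {t : ℝ} (h₁ : lam ≠ Complex.exp ((t / 2 : ℝ) : ℂ))
    (h₂ : lam ≠ -Complex.exp ((t / 2 : ℝ) : ℂ)) : lam ^ 2 - Complex.exp (t : ℂ) ≠ 0 := by
  have hsq : Complex.exp (t : ℂ) = Complex.exp ((t / 2 : ℝ) : ℂ) ^ 2 := by
    rw [← Complex.exp_nat_mul]
    push_cast
    ring_nf
  rw [hsq, sq_sub_sq]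
  exact mul_ne_zero (by rwa [Ne, add_eq_zero_iff_eq_neg]) (sub_ne_zero.mpr h₁)

section RevInvariant

variable {n : ℕ} {m : Bool → Fin (2 * n) → Fin (2 * n) → ℝ} (θ : ℝ)
  (hm : ∀ ε a b, m ε a b = m ε a.rev b ∧ m ε a b = m ε a b.rev)
include hm

lemma Rhat_eq_sum_vecMulVec :
    Rhat m θ = (1 / 2 : ℂ) • ∑ ε, ∑ a, ∑ b,
      (Real.exp (m ε a b * θ) : ℂ) • vecMulVec (Pi.single (a, b) 1) (signedVec ε a b) := by
  have hl : ∀ ε a b, m ε a.rev b = m ε a b := fun ε a b => (hm ε a b).1.symm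
  have hr : ∀ ε a b, m ε a b.rev = m ε a b := fun ε a b => (hm ε a b).2.symm
  simp only [Rhat, P_eq_vecMulVec, sum_eq_sum_emb_add_rev, Finset.smul_sum,
    ← Finset.sum_add_distrib, hl, hr, Fin.rev_rev]
  refine Fintype.sum_congr _ _ fun ε => Fintype.sum_congr _ _ fun i =>
    Fintype.sum_congr _ _ fun j => ?_
  module

lemma Rhat_row (x y : Fin (2 * n)) :
    Rhat m θ (x, y) = (1 / 2 : ℂ) • ∑ ε, (Real.exp (m ε x y * θ) : ℂ) • signedVec ε x y := by
  ext k
  simp [Rhat_eq_sum_vecMulVec θ hm, Matrix.sum_apply, vecMulVec_apply, Pi.single_apply, ite_and]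

lemma signedVec_vecMul_Rhat (ε : Bool) (x y : Fin (2 * n)) :
    signedVec ε x y ᵥ* Rhat m θ = (Real.exp (m ε x y * θ) : ℂ) • signedVec ε x y := by
  have hrev : ∀ ε, m ε x.rev y.rev = m ε x y := fun ε => by
    rw [← (hm ε x.rev y).2, ← (hm ε x y).1]
  rw [signedVec_vecMul, Rhat_row θ hm, Rhat_row θ hm]
  simp only [hrev, signedVec_rev, Fintype.sum_bool]
  cases ε <;> simp only [sgn_true, sgn_false] <;> module

lemma signedVec_vecMul_flipP_mul_Rhat_sub (lam : ℂ) (ε : Bool) (x y : Fin (2 * n)) :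
    signedVec ε x y ᵥ* (flipP (2 * n) * Rhat m θ - lam • 1) =
      (Real.exp (m ε y x * θ) : ℂ) • signedVec ε y x - lam • signedVec ε x y := by
  rw [vecMul_sub, ← vecMul_vecMul, signedVec_vecMul_flipP, signedVec_vecMul_Rhat θ hm, vecMul_smul,
    vecMul_one]

lemma X_row_vecMul_flipP_mul_Rhat_sub (lam : ℂ) (ε : Bool) (x y : Fin (2 * n))
    (hc : lam ^ 2 - Complex.exp (((m ε x y + m ε y x) * θ : ℝ) : ℂ) ≠ 0) :
    ((lam ^ 2 - Complex.exp (((m ε x y + m ε y x) * θ : ℝ) : ℂ))⁻¹ •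
        (lam • signedVec ε x y + Complex.exp ((m ε y x * θ : ℝ) : ℂ) • signedVec ε y x)) ᵥ*
      (flipP (2 * n) * Rhat m θ - lam • 1) = -signedVec ε x y := by
  have hexp : Complex.exp (((m ε x y + m ε y x) * θ : ℝ) : ℂ) =
      Complex.exp ((m ε x y * θ : ℝ) : ℂ) * Complex.exp ((m ε y x * θ : ℝ) : ℂ) := by
    rw [← Complex.exp_add, add_mul, Complex.ofReal_add]
  rw [smul_vecMul, add_vecMul, smul_vecMul, smul_vecMul,
    signedVec_vecMul_flipP_mul_Rhat_sub θ hm, signedVec_vecMul_flipP_mul_Rhat_sub θ hm,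
    Complex.ofReal_exp, Complex.ofReal_exp]
  rw [hexp] at hc ⊢
  linear_combination (norm := module) -(inv_mul_cancel₀ hc) • signedVec ε x y

end RevInvariant

/-- For even `N = 2n`, with `λ(θ) ≠ ± e^{(m_{ab}^{(ε)}+m_{ba}^{(ε)})θ/2}` for all `a, b, ε`,
the matrix `R(θ) − λ(θ)I` (with `R(θ) = 𝐏R̂(θ)`) is invertible and its inverse is the
closed form `X(θ)`. -/
theorem stmt_15 (n : ℕ) (m : Bool → Fin (2 * n) → Fin (2 * n) → ℝ)
    (hm : ∀ ε a b, m ε a b = m ε a.rev b ∧ m ε a b = m ε a b.rev) (θ : ℝ) (lam : ℂ)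
    (hlam : ∀ (ε : Bool) (a b : Fin (2 * n)),
      lam ≠ Complex.exp (((m ε a b + m ε b a) * θ / 2 : ℝ) : ℂ) ∧
      lam ≠ -Complex.exp (((m ε a b + m ε b a) * θ / 2 : ℝ) : ℂ)) :
    X m θ lam * (flipP (2 * n) * Rhat m θ - lam • 1) = 1 ∧
      (flipP (2 * n) * Rhat m θ - lam • 1) * X m θ lam = 1 := by
  have hc : ∀ ε a b, lam ^ 2 - Complex.exp (((m ε a b + m ε b a) * θ : ℝ) : ℂ) ≠ 0 :=
    fun ε a b => sq_sub_exp_ne_zero (hlam ε a b).1 (hlam ε a b).2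
  have hX : X m θ lam * (flipP (2 * n) * Rhat m θ - lam • 1) = 1 := by
    simp only [X_eq_vecMulVec, Matrix.smul_mul, Finset.sum_mul, vecMulVec_mul,
      X_row_vecMul_flipP_mul_Rhat_sub θ hm lam _ _ _ (hc _ _ _), vecMulVec_neg,
      Finset.sum_neg_distrib, sum_vecMulVec_signedVec]
    module
  exact ⟨hX, mul_eq_one_comm.mp hX⟩
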